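/- arXiv:2405.06475 — 2 statements merged into one kernel-verified Lean document; each statement's English description precedes it below -/
import Mathlib

section
/- Let R be a commutative ring and D a karoubian additive R-linear category with weak kernels and weak cokernels. Let S be a full subcategory of D which is closed under weak cokernels and under direct summands. If S is precovering in D, then S is coreflective, i.e. the inclusion functor S → D has a right adjoint. -/
/-!
Take an `S`-precover `p : S₁ ⟶ D₀`, a weak kernel `k : K ⟶ S₁` of `p` and an `S`-precover
`q : S₂ ⟶ K`. Every map from `S` killed by `p` factors through `q ≫ k`, so a weak cokernel
`g : S₁ ⟶ Z` of `q ≫ k` taken inside `S` kills exactly those maps, and `p = g ≫ t`. Lifting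
`t` back through `p` and composing with `g` gives `ε : Z ⟶ Z` with `ε ≫ t = t` that is killed
by every map from `S` killing `t`; applied to `ε - 𝟙` this makes `ε` idempotent. Its image
`C`, a summand of `Z`, lies in `S`, and `C ⟶ Z ⟶ D₀` is a terminal object of `S ↓ D₀`.
These pointwise coreflections assemble into a right adjoint of the inclusion.
-/

open CategoryTheory Opposite

universe w v u

namespace Paper

variable {R : Type w} [CommRing R] {D : Type u} [Category.{v} D] [Preadditive D]
  [CategoryTheory.Linear R D]

/-- `X → Y → Z` is a weak kernel sequence, i.e. `D(-,X) → D(-,Y) → D(-,Z)` is exact. -/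
def IsWeakKernelSeq {X Y Z : D} (f : X ⟶ Y) (g : Y ⟶ Z) : Prop :=
  ∀ (W : D) (w : W ⟶ Y), w ≫ g = 0 ↔ ∃ t : W ⟶ X, t ≫ f = w

/-- `X → Y → Z` is a weak cokernel sequence, i.e. `D(Z,W) → D(Y,W) → D(X,W)` is exact for
every `W`. -/
def IsWeakCokernelSeq {X Y Z : D} (f : X ⟶ Y) (g : Y ⟶ Z) : Prop :=
  ∀ (W : D) (w : Y ⟶ W), f ≫ w = 0 ↔ ∃ t : Z ⟶ W, g ≫ t = w

/-- `D` has weak kernels. -/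
def HasWeakKernels (D : Type u) [Category.{v} D] [Preadditive D] : Prop :=
  ∀ ⦃Y Z : D⦄ (g : Y ⟶ Z), ∃ (X : D) (f : X ⟶ Y), IsWeakKernelSeq f g

/-- `D` has weak cokernels. -/
def HasWeakCokernels (D : Type u) [Category.{v} D] [Preadditive D] : Prop :=
  ∀ ⦃X Y : D⦄ (f : X ⟶ Y), ∃ (Z : D) (g : Y ⟶ Z), IsWeakCokernelSeq f g

section Coreflection

variable {𝒞 : Type*} [Category 𝒞] {S : 𝒞 → Prop}

def IsPrecover (S : 𝒞 → Prop) {S₀ D₀ : 𝒞} (p : S₀ ⟶ D₀) : Prop :=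
  S S₀ ∧ ∀ X : 𝒞, S X → ∀ u : X ⟶ D₀, ∃ v : X ⟶ S₀, v ≫ p = u

/-- A terminal object of the comma category `S ↓ D₀`, unfolded. -/
def IsCoreflection (S : 𝒞 → Prop) {C D₀ : 𝒞} (ε : C ⟶ D₀) : Prop :=
  S C ∧ ∀ X : 𝒞, S X → ∀ u : X ⟶ D₀, ∃! c : X ⟶ C, c ≫ ε = u

theorem IsPrecover.of_fac {S₁ Z D₀ : 𝒞} {p : S₁ ⟶ D₀} {g : S₁ ⟶ Z} {t : Z ⟶ D₀}
    (hp : IsPrecover S p) (hZ : S Z) (hgt : g ≫ t = p) : IsPrecover S t := by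
  refine ⟨hZ, fun X hX u => ?_⟩
  obtain ⟨v, rfl⟩ := hp.2 X hX u
  exact ⟨v ≫ g, by rw [Category.assoc, hgt]⟩

theorem IsCoreflection.hasTerminal {C D₀ : 𝒞} {ε : C ⟶ D₀} (hε : IsCoreflection S ε) :
    Limits.HasTerminal (CostructuredArrow (ObjectProperty.ι S) D₀) := by
  choose lift fac uniq using fun (Y : CostructuredArrow (ObjectProperty.ι S) D₀) =>
    hε.2 Y.left.obj Y.left.property Y.hom
  let T := CostructuredArrow.mk (S := ObjectProperty.ι S) (Y := ⟨C, hε.1⟩) ε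
  exact Limits.IsTerminal.hasTerminal (X := T) <|
    .ofUniqueHom (fun Y => CostructuredArrow.homMk (ObjectProperty.homMk (lift Y)) (fac Y))
      fun Y m => CostructuredArrow.hom_ext _ _ <| InducedCategory.hom_ext <|
        uniq Y m.left.hom (CostructuredArrow.w m)

end Coreflection

section Preadditive

variable {S : D → Prop}

theorem IsWeakKernelSeq.comp_eq_zero {X Y Z : D} {f : X ⟶ Y} {g : Y ⟶ Z}
    (h : IsWeakKernelSeq f g) : f ≫ g = 0 :=
  (h X f).mpr ⟨𝟙 X, Category.id_comp f⟩

theorem IsWeakCokernelSeq.comp_eq_zero {X Y Z : D} {f : X ⟶ Y} {g : Y ⟶ Z}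
    (h : IsWeakCokernelSeq f g) : f ≫ g = 0 :=
  (h Z g).mpr ⟨𝟙 Z, Category.comp_id g⟩

theorem exists_weakCokernel_killing_kernel {S₁ S₂ K D₀ : D} {p : S₁ ⟶ D₀} {k : K ⟶ S₁}
    {q : S₂ ⟶ K} (hcoker : ∀ ⦃X Y : D⦄ (f : X ⟶ Y), S X → S Y →
      ∃ (Z : D) (g : Y ⟶ Z), S Z ∧ IsWeakCokernelSeq f g)
    (hS₁ : S S₁) (hk : IsWeakKernelSeq k p) (hq : IsPrecover S q) :
    ∃ (Z : D) (g : S₁ ⟶ Z) (t : Z ⟶ D₀), S Z ∧ g ≫ t = p ∧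
      ∀ X : D, S X → ∀ v : X ⟶ S₁, v ≫ p = 0 → v ≫ g = 0 := by
  obtain ⟨Z, g, hZ, hg⟩ := hcoker (q ≫ k) hq.1 hS₁
  obtain ⟨t, hgt⟩ := (hg D₀ p).mp (by rw [Category.assoc, hk.comp_eq_zero, Limits.comp_zero])
  refine ⟨Z, g, t, hZ, hgt, fun X hX v hv => ?_⟩
  obtain ⟨w, rfl⟩ := (hk X v).mp hv
  obtain ⟨w', rfl⟩ := hq.2 X hX w
  rw [Category.assoc w', Category.assoc, hg.comp_eq_zero, Limits.comp_zero]

theorem exists_endo_of_killing_kernel {S₁ Z D₀ : D} {p : S₁ ⟶ D₀} {g : S₁ ⟶ Z} {t : Z ⟶ D₀}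
    (hp : IsPrecover S p) (hZ : S Z) (hgt : g ≫ t = p)
    (hg : ∀ X : D, S X → ∀ v : X ⟶ S₁, v ≫ p = 0 → v ≫ g = 0) :
    ∃ ε : Z ⟶ Z, ε ≫ t = t ∧ ∀ X : D, S X → ∀ c : X ⟶ Z, c ≫ t = 0 → c ≫ ε = 0 := by
  obtain ⟨h, hh⟩ := hp.2 Z hZ t
  refine ⟨h ≫ g, by rw [Category.assoc, hgt, hh], fun X hX c hc => ?_⟩
  rw [← Category.assoc]
  exact hg X hX _ (by rw [Category.assoc, hh, hc])

theorem idempotent_of_comp_eq_self {Z D₀ : D} {t : Z ⟶ D₀} {ε : Z ⟶ Z} (hε : ε ≫ t = t)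
    (hker : ∀ c : Z ⟶ Z, c ≫ t = 0 → c ≫ ε = 0) : ε ≫ ε = ε := by
  have := hker (ε - 𝟙 Z) (by rw [Preadditive.sub_comp, hε, Category.id_comp, sub_self])
  rwa [Preadditive.sub_comp, Category.id_comp, sub_eq_zero] at this

theorem isCoreflection_of_retract {C Z D₀ : D} {t : Z ⟶ D₀} {i : C ⟶ Z} {e : Z ⟶ C}
    (hie : i ≫ e = 𝟙 C) (hC : S C) (ht : IsPrecover S t) (hε : (e ≫ i) ≫ t = t)
    (hker : ∀ X : D, S X → ∀ c : X ⟶ Z, c ≫ t = 0 → c ≫ e ≫ i = 0) :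
    IsCoreflection S (i ≫ t) := by
  have eq_zero : ∀ X : D, S X → ∀ c : X ⟶ C, c ≫ i ≫ t = 0 → c = 0 := fun X hX c hc => by
    have := hker X hX (c ≫ i) (by rwa [Category.assoc])
    rw [Category.assoc, ← Category.assoc i, hie, Category.id_comp] at this
    rw [← Category.comp_id c, ← hie, ← Category.assoc, this, Limits.zero_comp]
  refine ⟨hC, fun X hX u => ?_⟩
  obtain ⟨v, rfl⟩ := ht.2 X hX u
  refine ⟨v ≫ e, by dsimp only; rw [Category.assoc, ← Category.assoc e, hε], fun c hc => ?_⟩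
  rw [← sub_eq_zero]
  refine eq_zero X hX _ ?_
  rw [Preadditive.sub_comp, hc, Category.assoc, ← Category.assoc e, hε, sub_self]

theorem exists_isCoreflection_of_endo {Z D₀ : D} {t : Z ⟶ D₀} (hkar : IsIdempotentComplete D)
    (hsmd : ∀ ⦃X Y : D⦄, S X → ∀ (s : Y ⟶ X) (r : X ⟶ Y), s ≫ r = 𝟙 Y → S Y)
    (ht : IsPrecover S t) {ε : Z ⟶ Z} (hε : ε ≫ t = t)
    (hker : ∀ X : D, S X → ∀ c : X ⟶ Z, c ≫ t = 0 → c ≫ ε = 0) :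
    ∃ (C : D) (ε' : C ⟶ D₀), IsCoreflection S ε' := by
  obtain ⟨C, i, e, hie, rfl⟩ :=
    hkar.idempotents_split Z ε (idempotent_of_comp_eq_self hε (hker Z ht.1))
  exact ⟨C, i ≫ t, isCoreflection_of_retract hie (hsmd ht.1 i e hie) ht hε hker⟩

theorem exists_isCoreflection (hkar : IsIdempotentComplete D) (hwk : HasWeakKernels D)
    (hcoker : ∀ ⦃X Y : D⦄ (f : X ⟶ Y), S X → S Y →
      ∃ (Z : D) (g : Y ⟶ Z), S Z ∧ IsWeakCokernelSeq f g)
    (hsmd : ∀ ⦃X Y : D⦄, S X → ∀ (s : Y ⟶ X) (r : X ⟶ Y), s ≫ r = 𝟙 Y → S Y)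
    (hprecover : ∀ Y : D, ∃ (S₀ : D) (p : S₀ ⟶ Y), IsPrecover S p) (D₀ : D) :
    ∃ (C : D) (ε : C ⟶ D₀), IsCoreflection S ε := by
  obtain ⟨S₁, p, hp⟩ := hprecover D₀
  obtain ⟨K, k, hk⟩ := hwk p
  obtain ⟨S₂, q, hq⟩ := hprecover K
  obtain ⟨Z, g, t, hZ, hgt, hg⟩ := exists_weakCokernel_killing_kernel hcoker hp.1 hk hq
  obtain ⟨ε, hε, hker⟩ := exists_endo_of_killing_kernel hp hZ hgt hg
  exact exists_isCoreflection_of_endo hkar hsmd (hp.of_fac hZ hgt) hε hker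

end Preadditive

theorem coreflective_of_precovering_general
    (hkar : IsIdempotentComplete D)
    (hwk : HasWeakKernels D)
    (S : D → Prop)
    -- `S` is closed under weak cokernels: a weak cokernel of a morphism of `S` may be
    -- chosen in `S`
    (hcoker : ∀ ⦃X Y : D⦄ (f : X ⟶ Y), S X → S Y →
      ∃ (Z : D) (g : Y ⟶ Z), S Z ∧ IsWeakCokernelSeq f g)
    -- `S` is closed under direct summands
    (hsmd : ∀ ⦃X Y : D⦄, S X → ∀ (s : Y ⟶ X) (r : X ⟶ Y), s ≫ r = 𝟙 Y → S Y)
    -- `S` is precovering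
    (hprecover : ∀ D₀ : D, ∃ (S₀ : D) (_ : S S₀) (p : S₀ ⟶ D₀),
      ∀ (X : D), S X → ∀ u : X ⟶ D₀, ∃ v : X ⟶ S₀, v ≫ p = u) :
    ∃ G : D ⥤ ObjectProperty.FullSubcategory S, Nonempty (ObjectProperty.ι S ⊣ G) := by
  have hprecover₀ (Y : D) : ∃ (S₀ : D) (p : S₀ ⟶ Y), IsPrecover S p := by
    obtain ⟨S₀, hS₀, p, hp⟩ := hprecover Y
    exact ⟨S₀, p, hS₀, hp⟩
  have (D₀ : D) : Limits.HasTerminal (CostructuredArrow (ObjectProperty.ι S) D₀) := by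
    obtain ⟨C, ε, hε⟩ := exists_isCoreflection hkar hwk hcoker hsmd hprecover₀ D₀
    exact hε.hasTerminal
  exact (isLeftAdjoint_of_costructuredArrowTerminals _).exists_rightAdjoint

theorem coreflective_of_precovering
    (hkar : IsIdempotentComplete D)
    (hwk : HasWeakKernels D) (hwc : HasWeakCokernels D)
    (S : D → Prop)
    -- `S` is closed under weak cokernels: a weak cokernel of a morphism of `S` may be
    -- chosen in `S`
    (hcoker : ∀ ⦃X Y : D⦄ (f : X ⟶ Y), S X → S Y →
      ∃ (Z : D) (g : Y ⟶ Z), S Z ∧ IsWeakCokernelSeq f g)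
    -- `S` is closed under direct summands
    (hsmd : ∀ ⦃X Y : D⦄, S X → ∀ (s : Y ⟶ X) (r : X ⟶ Y), s ≫ r = 𝟙 Y → S Y)
    -- `S` is precovering
    (hprecover : ∀ D₀ : D, ∃ (S₀ : D) (_ : S S₀) (p : S₀ ⟶ D₀),
      ∀ (X : D), S X → ∀ u : X ⟶ D₀, ∃ v : X ⟶ S₀, v ≫ p = u) :
    ∃ G : D ⥤ ObjectProperty.FullSubcategory S, Nonempty (ObjectProperty.ι S ⊣ G) :=
  coreflective_of_precovering_general hkar hwk S hcoker hsmd hprecover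

end Paper
end

section
/- Let D be a compactly generated R-linear triangulated category, M a D^c-module, and G a compact object such that M(G) is a finitely generated R-module. Then there exist a compact object D and a natural transformation yD → M which induces a surjective map D(G,D) → M(G). -/
/-!
Pick generators `m₁, …, mₙ` of the `R`-module `M(G)`. The biproduct `Gⁿ` is compact: a finite
decomposition `∑ pⱼ ≫ sⱼ = 𝟙` of an object transports bijectivity of `⊕ D(-, fᵢ) → D(-, ∐ f)`
from the summands to the whole. By Yoneda the element `∑ M(πⱼ)(mⱼ)` of `M(Gⁿ)` defines
`y Gⁿ ⟶ M`, which sends the `i`-th inclusion `G ⟶ Gⁿ` to `mᵢ`, so its image in `M(G)` contains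
a generating set.
-/

open CategoryTheory CategoryTheory.Limits CategoryTheory.Pretriangulated Opposite

universe w v u

namespace Paper

section OppositeLinear

variable (R : Type w) [CommRing R] {E : Type*} [Category E] [Preadditive E]
  [CategoryTheory.Linear R E]

instance oppositeHomModule (X Y : Eᵒᵖ) : Module R (X ⟶ Y) where
  smul r f := (r • f.unop).op
  one_smul f := Quiver.Hom.unop_inj (one_smul _ _)
  mul_smul r s f := Quiver.Hom.unop_inj (mul_smul _ _ _)
  smul_zero r := Quiver.Hom.unop_inj (smul_zero _)
  smul_add r f g := Quiver.Hom.unop_inj (smul_add _ _ _)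
  add_smul r s f := Quiver.Hom.unop_inj (add_smul _ _ _)
  zero_smul f := Quiver.Hom.unop_inj (zero_smul _ _)

instance oppositeLinear : CategoryTheory.Linear R Eᵒᵖ where
  smul_comp X Y Z r f g := by
    exact Quiver.Hom.unop_inj (CategoryTheory.Linear.comp_smul _ _ _ g.unop r f.unop)
  comp_smul X Y Z f r g := by
    exact Quiver.Hom.unop_inj (CategoryTheory.Linear.smul_comp _ _ _ r g.unop f.unop)

end OppositeLinear

variable (R : Type w) [CommRing R] (D : Type u) [Category.{v} D] [Preadditive D]
  [CategoryTheory.Linear R D] [HasZeroObject D] [HasShift D ℤ]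
  [∀ n : ℤ, (shiftFunctor D n).Additive] [Pretriangulated D]
  [HasCoproducts.{v} D]

variable {D}

/-- the canonical map `⊕ᵢ D(C, fᵢ) → D(C, ∐ f)` -/
noncomputable def homCoprodMap (C : D) {ι : Type v} (f : ι → D) :
    DirectSum ι (fun i => C ⟶ f i) →+ (C ⟶ ∐ f) :=
  letI := Classical.decEq ι
  DirectSum.toAddMonoid (fun i => AddMonoidHom.mk' (fun u => u ≫ Limits.Sigma.ι f i)
    (fun u v => by simp [Preadditive.add_comp]))

/-- `C` is a compact object: `D(C,-)` commutes with coproducts. -/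
def IsCompactObj (C : D) : Prop :=
  ∀ (ι : Type v) (f : ι → D), Function.Bijective (homCoprodMap C f)

variable (D)

/-- the full subcategory `D^c ⊆ D` of compact objects -/
abbrev Compacts := ObjectProperty.FullSubcategory (fun C : D => IsCompactObj C)

/-- `D` is compactly generated. -/
def CompactlyGenerated : Prop :=
  EssentiallySmall.{v} (Compacts D) ∧
  ∀ X : D, (∀ C : D, IsCompactObj C → ∀ f : C ⟶ X, f = 0) → IsZero X

/-- the restricted Yoneda functor `y : D ⥤ Mod-D^c`, `X ↦ D(-,X)|_{D^c}` -/
noncomputable def ry : D ⥤ ((Compacts D)ᵒᵖ ⥤ ModuleCat.{v} R) :=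
  linearYoneda R D ⋙
    (Functor.whiskeringLeft (Compacts D)ᵒᵖ Dᵒᵖ (ModuleCat.{v} R)).obj
      (ObjectProperty.ι _).op

variable {D}

/-- a triangle is pure if `0 → yX → yY → yZ → 0` is a short exact sequence of
`D^c`-modules -/
def IsPureTriangle (T : Pretriangulated.Triangle D) : Prop :=
  T ∈ (distTriang D) ∧ ∀ C : D, IsCompactObj C →
    (Function.Injective (fun u : C ⟶ T.obj₁ => u ≫ T.mor₁) ∧
     (∀ v : C ⟶ T.obj₂, v ≫ T.mor₂ = 0 ↔ ∃ u : C ⟶ T.obj₁, u ≫ T.mor₁ = v) ∧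
     Function.Surjective (fun v : C ⟶ T.obj₂ => v ≫ T.mor₂))

/-- `P` is pure projective, i.e. `P ∈ Add(D^c)` -/
def IsPureProjective (P : D) : Prop :=
  ∃ (ι : Type v) (f : ι → D) (_ : ∀ i, IsCompactObj (f i))
    (s : P ⟶ ∐ f) (r : (∐ f) ⟶ P), s ≫ r = 𝟙 P

/-- `X` has pure projective dimension at most 1 -/
def PPdimLE1 (X : D) : Prop :=
  ∃ (P₁ P₀ : D) (_ : IsPureProjective P₁) (_ : IsPureProjective P₀)
    (a : P₁ ⟶ P₀) (b : P₀ ⟶ X) (c : X ⟶ P₁⟦(1 : ℤ)⟧),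
    IsPureTriangle (Pretriangulated.Triangle.mk a b c)


variable (D)

/-- the Yoneda functor on compact objects, `D^c ⥤ Mod-D^c` -/
noncomputable def yc : Compacts D ⥤ ((Compacts D)ᵒᵖ ⥤ ModuleCat.{v} R) :=
  ObjectProperty.ι _ ⋙ ry R D

/-- A `D^c`-module is cohomological if it sends (distinguished) triangles of compact
objects to exact sequences. -/
def IsCohomologicalMod (M : (Compacts D)ᵒᵖ ⥤ ModuleCat.{v} R) : Prop :=
  ∀ (X Y Z : Compacts D) (f : X ⟶ Y) (g : Y ⟶ Z) (h : Z.obj ⟶ X.obj⟦(1 : ℤ)⟧),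
    Pretriangulated.Triangle.mk (show X.obj ⟶ Y.obj from f.hom) (show Y.obj ⟶ Z.obj from g.hom) h ∈
      (distTriang D) →
    Function.Exact (M.map g.op) (M.map f.op)

/-- the `D^c`-module `M` is `G`-locally coherent: (LC1) and (LC2) hold -/
def IsLocCoh (M : (Compacts D)ᵒᵖ ⥤ ModuleCat.{v} R) (G : Compacts D) : Prop :=
  -- (LC1)
  (∃ (D₀ : Compacts D) (α : (yc R D).obj D₀ ⟶ M),
     Function.Surjective (α.app (op G))) ∧
  -- (LC2)
  (∀ (D₀ : Compacts D) (β : (yc R D).obj D₀ ⟶ M),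
     ∃ (C₀ : Compacts D) (f : C₀ ⟶ D₀),
       (yc R D).map f ≫ β = 0 ∧
       Function.Exact (((yc R D).map f).app (op G)) (β.app (op G)))

variable {D}

end Paper

section PrecompSum

variable {C : Type*} [Category C] [Preadditive C]

noncomputable def precompSum {A B : C} (g : B ⟶ A) {ι : Type*} (f : ι → C) :
    (DirectSum ι fun i => A ⟶ f i) →+ DirectSum ι fun i => B ⟶ f i :=
  DirectSum.map fun i => Preadditive.leftComp (f i) g

@[simp]
lemma precompSum_apply {A B : C} (g : B ⟶ A) {ι : Type*} (f : ι → C)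
    (u : DirectSum ι fun i => A ⟶ f i) (i : ι) : precompSum g f u i = g ≫ u i :=
  DirectSum.map_apply _ _ _

@[simp]
lemma precompSum_of {A B : C} (g : B ⟶ A) {ι : Type*} [DecidableEq ι] (f : ι → C) (i : ι)
    (x : A ⟶ f i) :
    precompSum g f (DirectSum.of (fun i => A ⟶ f i) i x) =
      DirectSum.of (fun i => B ⟶ f i) i (g ≫ x) :=
  DirectSum.map_of _ _ _

end PrecompSum

lemma CategoryTheory.Functor.map_sum_map_of_comp_eq_ite {R : Type*} [Ring R] {C : Type*}
    [Category C] [Preadditive C] (F : Cᵒᵖ ⥤ ModuleCat R) [F.Additive] {J : Type*} [Fintype J]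
    [DecidableEq J] {X P : C} (s : J → (X ⟶ P)) (p : J → (P ⟶ X))
    (hsp : ∀ i j, s i ≫ p j = if i = j then 𝟙 X else 0) (m : J → F.obj (op X)) (i : J) :
    F.map (s i).op (∑ j, F.map (p j).op (m j)) = m i := by
  have hterm : ∀ j, F.map (s i).op (F.map (p j).op (m j)) = if i = j then m j else 0 := by
    intro j
    rw [← ModuleCat.comp_apply, ← F.map_comp, ← op_comp, hsp]
    split_ifs <;> simp
  simp [hterm]

namespace Paper

section Compactness

variable {D : Type u} [Category.{v} D] [Preadditive D] [HasCoproducts.{v} D]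

lemma homCoprodMap_of (C : D) {ι : Type v} [DecidableEq ι] (f : ι → D) (i : ι)
    (x : C ⟶ f i) :
    homCoprodMap C f (DirectSum.of (fun i => C ⟶ f i) i x) = x ≫ Sigma.ι f i := by
  obtain rfl : ‹DecidableEq ι› = Classical.decEq ι := Subsingleton.elim _ _
  let := Classical.decEq ι
  simp only [homCoprodMap]
  rw [DirectSum.toAddMonoid_of]
  rfl

lemma homCoprodMap_precompSum {A B : D} (g : B ⟶ A) {ι : Type v} (f : ι → D)
    (u : DirectSum ι fun i => A ⟶ f i) :
    homCoprodMap B f (precompSum g f u) = g ≫ homCoprodMap A f u := by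
  classical
  induction u using DirectSum.induction_on with
  | zero => simp
  | of i x => simp [homCoprodMap_of]
  | add u u' hu hu' => simp [hu, hu']

lemma isCompactObj_of_sum_eq_id {C : D} {J : Type*} [Fintype J] {X : J → D}
    (hX : ∀ j, IsCompactObj (X j)) (p : ∀ j, C ⟶ X j) (s : ∀ j, X j ⟶ C)
    (hps : ∑ j, p j ≫ s j = 𝟙 C) : IsCompactObj C := by
  have hdecomp : ∀ {Y : D} (v : C ⟶ Y), ∑ j, p j ≫ s j ≫ v = v := fun v => by
    simp only [← Category.assoc, ← Preadditive.sum_comp, hps, Category.id_comp]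
  intro ι f
  constructor
  · intro u u' h
    have hs : ∀ j, precompSum (s j) f u = precompSum (s j) f u' := fun j =>
      (hX j ι f).1 (by simp only [homCoprodMap_precompSum, h])
    ext i
    rw [← hdecomp (u i), ← hdecomp (u' i)]
    simp only [← precompSum_apply, hs]
  · intro v
    choose u hu using fun j => (hX j ι f).2 (s j ≫ v)
    refine ⟨∑ j, precompSum (p j) f (u j), ?_⟩
    simp only [map_sum, homCoprodMap_precompSum, hu, hdecomp]

lemma isCompactObj_biproduct {J : Type} [Fintype J] (X : J → D) [HasBiproduct X]
    (hX : ∀ j, IsCompactObj (X j)) : IsCompactObj (⨁ X) :=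
  isCompactObj_of_sum_eq_id hX (biproduct.π X) (biproduct.ι X) biproduct.total

end Compactness

section Yoneda

variable (R : Type w) [CommRing R] {D : Type u} [Category.{v} D] [Preadditive D]
  [CategoryTheory.Linear R D] [HasCoproducts.{v} D]

noncomputable def ycHomOfElement (M : (Compacts D)ᵒᵖ ⥤ ModuleCat.{v} R) [M.Additive]
    [Functor.Linear R M] (C : Compacts D) (m : M.obj (op C)) : (yc R D).obj C ⟶ M where
  app B := ModuleCat.ofHom
    { toFun g := M.map (ObjectProperty.homMk (X := B.unop) (Y := C) g).op m
      map_add' g g' := by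
        change M.map ((ObjectProperty.homMk g).op + (ObjectProperty.homMk g').op) m = _
        rw [M.map_add]
        rfl
      map_smul' r g := by
        change M.map (r • (ObjectProperty.homMk (X := B.unop) (Y := C) g).op) m = _
        rw [M.map_smul]
        rfl }
  naturality B B' φ := by
    ext g
    change M.map ((ObjectProperty.homMk g).op ≫ φ) m = _
    rw [M.map_comp]
    rfl

lemma ycHomOfElement_app (M : (Compacts D)ᵒᵖ ⥤ ModuleCat.{v} R) [M.Additive]
    [Functor.Linear R M] (C : Compacts D) (m : M.obj (op C)) {B : Compacts D} (g : B ⟶ C) :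
    (ycHomOfElement R M C m).app (op B) g.hom = M.map g.op m :=
  rfl

end Yoneda

variable (R : Type w) [CommRing R] (D : Type u) [Category.{v} D] [Preadditive D]
  [CategoryTheory.Linear R D] [HasZeroObject D] [HasShift D ℤ]
  [∀ n : ℤ, (shiftFunctor D n).Additive] [Pretriangulated D]
  [HasCoproducts.{v} D]

variable {D}

theorem exists_epi_onto_MG
    (M : (Compacts D)ᵒᵖ ⥤ ModuleCat.{v} R) (hadd : M.Additive)
    (hlin : @Functor.Linear R _ _ _ _ _ _ _ _ _ M)
    (G : Compacts D) (hfin : Module.Finite R (M.obj (op G))) :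
    ∃ (D₀ : Compacts D) (α : (yc R D).obj D₀ ⟶ M),
      Function.Surjective (α.app (op G)) := by
  classical
  obtain ⟨n, m, hm⟩ := Module.Finite.exists_fin (R := R) (M := M.obj (op G))
  let X : Fin n → D := fun _ => G.obj
  let P : Compacts D := ⟨⨁ X, isCompactObj_biproduct X fun _ => G.2⟩
  let s (i : Fin n) : G ⟶ P := ObjectProperty.homMk (biproduct.ι X i)
  let p (i : Fin n) : P ⟶ G := ObjectProperty.homMk (biproduct.π X i)
  have hsp (i j : Fin n) : s i ≫ p j = if i = j then 𝟙 G else 0 := by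
    ext
    split_ifs with h
    · subst h; simp [s, p, X]
    · simp [s, p, biproduct.ι_π_ne _ h]
  refine ⟨P, ycHomOfElement R M P (∑ j, M.map (p j).op (m j)), ?_⟩
  refine LinearMap.range_eq_top.mp (top_le_iff.mp ?_)
  rw [← hm, Submodule.span_le]
  rintro _ ⟨i, rfl⟩
  exact ⟨(s i).hom, (ycHomOfElement_app R M P _ (s i)).trans
    (M.map_sum_map_of_comp_eq_ite s p hsp m i)⟩

end Paper
end
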